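/- Let ρ ⊆ θ be congruences on a regular semigroup S. Then (θ/ρ)_k = (ρ ∨ θ_k)/ρ as congruences on S/ρ, where the subscript k denotes the least congruence with the same kernel. -/
import Mathlib

/-- Lallement's lemma: in a regular semigroup, any element idempotent mod a
congruence is congruent to a genuine idempotent. -/
lemma lallement {S : Type*} [Semigroup S]
    (hreg : ∀ a : S, ∃ a', a * a' * a = a ∧ a' * a * a' = a')
    (ρ : Con S) {x : S} (h : ρ (x * x) x) : ∃ e, e * e = e ∧ ρ x e := by
  obtain ⟨a', ha1, ha2⟩ := hreg (x * x)
  refine ⟨x * a' * x, ?_, ?_⟩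
  · have key : x * a' * x * (x * a' * x) = x * (a' * (x * x) * a') * x := by
      simp only [mul_assoc]
    rw [key, ha2]
  · -- ρ x (x*a'*x)
    have h1 : ρ (x * a' * x) (x * x * a' * (x * x)) :=
      ρ.mul (ρ.mul (ρ.symm h) (ρ.refl a')) (ρ.symm h)
    have h2 : x * x * a' * (x * x) = x * x := ha1
    have h3 : ρ (x * a' * x) x := by
      rw [h2] at h1
      exact ρ.trans h1 h
    exact ρ.symm h3

/-- For congruences `ρ ≤ θ` on a regular semigroup `S`,
`(θ/ρ)_k = (ρ ∨ θ_k)/ρ` as congruences on `S/ρ`. -/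
theorem stmt_6 {S : Type*} [Semigroup S]
    (hreg : ∀ a : S, ∃ a', a * a' * a = a ∧ a' * a * a' = a')
    (ρ θ θk : Con S) (hρθ : ρ ≤ θ)
    -- `θk` is the least congruence on `S` with the same kernel as `θ`
    (hθk_ker : ∀ a : S, (∃ e, e * e = e ∧ θk a e) ↔ (∃ e, e * e = e ∧ θ a e))
    (hθk_least : ∀ c : Con S,
      (∀ a : S, (∃ e, e * e = e ∧ c a e) ↔ (∃ e, e * e = e ∧ θ a e)) → θk ≤ c)
    (q q2 qk : Con ρ.Quotient)
    -- `q` is the quotient congruence `θ/ρ`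
    (hq : ∀ x y : S, q (x : ρ.Quotient) (y : ρ.Quotient) ↔ θ x y)
    -- `q2` is the quotient congruence `(ρ ⊔ θk)/ρ`
    (hq2 : ∀ x y : S, q2 (x : ρ.Quotient) (y : ρ.Quotient) ↔ (ρ ⊔ θk) x y)
    -- `qk` is the least congruence on `S/ρ` with the same kernel as `q`
    (hqk_ker : ∀ u : ρ.Quotient,
      (∃ v : ρ.Quotient, v * v = v ∧ qk u v) ↔ (∃ v : ρ.Quotient, v * v = v ∧ q u v))
    (hqk_least : ∀ c : Con ρ.Quotient,
      (∀ u : ρ.Quotient,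
        (∃ v : ρ.Quotient, v * v = v ∧ c u v) ↔
          (∃ v : ρ.Quotient, v * v = v ∧ q u v)) → qk ≤ c) :
    qk = q2 := by
  have hsurj : ∀ u : ρ.Quotient, ∃ x : S, (x : ρ.Quotient) = u := fun u =>
    Quotient.exists_rep u
  have hθkθ : θk ≤ θ := hθk_least θ (fun a => Iff.rfl)
  have hsupθ : ρ ⊔ θk ≤ θ := sup_le hρθ hθkθ
  -- idempotent quotient elements lift to idempotents
  have hidem : ∀ v : ρ.Quotient, v * v = v →
      ∃ e : S, e * e = e ∧ (e : ρ.Quotient) = v := by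
    intro v hv
    obtain ⟨x, rfl⟩ := hsurj v
    rw [← Con.coe_mul, Con.eq] at hv
    obtain ⟨e, he, hxe⟩ := lallement hreg ρ hv
    exact ⟨e, he, (Con.eq ρ).2 (ρ.symm hxe)⟩
  apply le_antisymm
  · -- qk ≤ q2 : q2 has the same kernel as q
    apply hqk_least
    intro u
    obtain ⟨a, rfl⟩ := hsurj u
    constructor
    · rintro ⟨v, hv, hav⟩
      obtain ⟨e, he, rfl⟩ := hidem v hv
      have : θ a e := hsupθ ((hq2 a e).1 hav)
      exact ⟨e, by rw [← Con.coe_mul, he], (hq a e).2 this⟩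
    · rintro ⟨v, hv, hav⟩
      obtain ⟨e, he, rfl⟩ := hidem v hv
      have hθae : θ a e := (hq a e).1 hav
      obtain ⟨f, hf, hθkaf⟩ := (hθk_ker a).2 ⟨e, he, hθae⟩
      exact ⟨f, by rw [← Con.coe_mul, hf],
        (hq2 a f).2 (le_sup_right (a := ρ) hθkaf)⟩
  · -- q2 ≤ qk : pull qk back to S, compare kernels with θ
    set c : Con S :=
      { r := fun a b => qk (a : ρ.Quotient) (b : ρ.Quotient)
        iseqv := ⟨fun a => qk.refl _, fun h => qk.symm h, fun h h' => qk.trans h h'⟩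
        mul' := fun h h' => by
          simpa [Con.coe_mul] using qk.mul h h' } with hc
    have hcker : ∀ a : S, (∃ e, e * e = e ∧ c a e) ↔ (∃ e, e * e = e ∧ θ a e) := by
      intro a
      constructor
      · rintro ⟨e, he, hae⟩
        have : ∃ v : ρ.Quotient, v * v = v ∧ q (a : ρ.Quotient) v :=
          (hqk_ker a).1 ⟨e, by rw [← Con.coe_mul, he], hae⟩
        obtain ⟨v, hv, hav⟩ := this
        obtain ⟨f, hf, rfl⟩ := hidem v hv
        exact ⟨f, hf, (hq a f).1 hav⟩
      · rintro ⟨e, he, hae⟩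
        have : ∃ v : ρ.Quotient, v * v = v ∧ qk (a : ρ.Quotient) v :=
          (hqk_ker a).2 ⟨e, by rw [← Con.coe_mul, he], (hq a e).2 hae⟩
        obtain ⟨v, hv, hav⟩ := this
        obtain ⟨f, hf, rfl⟩ := hidem v hv
        exact ⟨f, hf, hav⟩
    have hθkc : θk ≤ c := hθk_least c hcker
    have hρc : ρ ≤ c := by
      intro a b hab
      show qk (a : ρ.Quotient) (b : ρ.Quotient)
      rw [(Con.eq ρ).2 hab]
      exact qk.refl _
    have hsupc : ρ ⊔ θk ≤ c := sup_le hρc hθkc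
    intro u v huv
    obtain ⟨a, rfl⟩ := hsurj u
    obtain ⟨b, rfl⟩ := hsurj v
    exact hsupc ((hq2 a b).1 huv)
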